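/- arXiv:1001.2070 — 5 statements merged into one kernel-verified Lean document; each statement's English description precedes it below -/
import Mathlib

section
/- Let r ≥ 2 and let G be a maximal K_{r+1}-free graph (adding any edge creates a K_{r+1}) with δ(G) > (1 - 2/(2r-1))·n where n is the number of vertices. Then for any two nonadjacent vertices u and w, the common neighborhood of u and w contains a clique on r-1 vertices. -/
namespace SimpleGraph

variable {α : Type*} {G : SimpleGraph α}

lemma IsNClique.of_insert_of_notMem [DecidableEq α] {n : ℕ} {a : α} {s : Finset α}
    (h : G.IsNClique n (insert a s)) (ha : a ∉ s) :
    G.IsNClique (n - 1) s ∧ ∀ b ∈ s, G.Adj a b := by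
  rw [isNClique_iff, Finset.coe_insert, isClique_insert_of_notMem ha,
    Finset.card_insert_of_notMem ha] at h
  exact ⟨⟨h.1.1, by omega⟩, h.1.2⟩

end SimpleGraph

theorem stmt4_general {V : Type*} (G : SimpleGraph V)
    (r : ℕ)
    (hmax : Maximal (fun H : SimpleGraph V => H.CliqueFree (r + 1)) G) :
    ∀ u w : V, u ≠ w → ¬G.Adj u w →
      ∃ T : Finset V, (∀ x ∈ T, G.Adj u x ∧ G.Adj w x) ∧ G.IsNClique (r - 1) T := by
  classical
  intro u w hne hadj
  obtain ⟨s, hus, hws, hu, hw⟩ := SimpleGraph.exists_of_maximal_cliqueFree_not_adj hmax hne hadj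
  obtain ⟨hs, hsu⟩ := hu.of_insert_of_notMem hus
  exact ⟨s, fun x hx => ⟨hsu x hx, (hw.of_insert_of_notMem hws).2 x hx⟩, hs⟩

theorem stmt4 {V : Type*} [Fintype V] (G : SimpleGraph V) [DecidableRel G.Adj]
    (r : ℕ) (hr : 2 ≤ r)
    (hmax : Maximal (fun H : SimpleGraph V => H.CliqueFree (r + 1)) G)
    (hδ : ((1 : ℝ) - 2 / (2 * r - 1)) * (Fintype.card V) < G.minDegree) :
    ∀ u w : V, u ≠ w → ¬G.Adj u w →
      ∃ T : Finset V, (∀ x ∈ T, G.Adj u x ∧ G.Adj w x) ∧ G.IsNClique (r - 1) T :=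
  stmt4_general G r hmax
end

section
/- Let r ≥ 3 and let G be a maximal K_{r+1}-free graph on n vertices with δ(G) > (1 - 2/(2r-1))·n. Then for every vertex u and every vertex w not adjacent to u (w ≠ u), the number of common neighbors of u and w is at least d(u) + d(w) - (r-1)(n - δ(G)). -/
/-!
Adding the missing edge `uw` to a maximal `K_{r+1}`-free graph creates an `(r+1)`-clique, so
there is a set `S` of `r - 1` common neighbours of `u` and `w` with `S ∪ {u}` and `S ∪ {w}`
both `r`-cliques. A neighbour of `u` or `w` adjacent to all of `S` would extend one of these
to an `(r+1)`-clique, so each such neighbour is a non-neighbour of some vertex of `S`. Hence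
`|N(u) ∪ N(w)| ≤ (r - 1)(n - δ)`, and inclusion–exclusion gives the bound on `|N(u) ∩ N(w)|`.
-/

open Finset

namespace SimpleGraph

variable {V : Type*} {G : SimpleGraph V} {r : ℕ}

lemma IsNClique.exists_mem_not_adj_of_adj_of_cliqueFree_succ {s : Finset V} {v x : V}
    [DecidableEq V] (hc : G.IsNClique r (insert v s)) (h : G.CliqueFree (r + 1))
    (hvx : G.Adj v x) : ∃ y ∈ s, ¬ G.Adj x y := by
  obtain ⟨y, hy, hxy⟩ := hc.exists_not_adj_of_cliqueFree_succ h x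
  rcases mem_insert.1 hy with rfl | hy
  · exact absurd hvx.symm hxy
  · exact ⟨y, hy, hxy⟩

variable [Fintype V] [DecidableEq V] [DecidableRel G.Adj]

lemma card_biUnion_compl_neighborFinset_le (s : Finset V) :
    #(s.biUnion fun y ↦ (G.neighborFinset y)ᶜ) ≤ #s * (Fintype.card V - G.minDegree) :=
  card_biUnion_le_card_mul _ _ _ fun y _ ↦ by
    rw [card_compl, card_neighborFinset_eq_degree]
    exact Nat.sub_le_sub_left (G.minDegree_le_degree y) _

lemma exists_neighborFinset_union_subset_biUnion_compl_of_maximal_cliqueFree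
    (h : Maximal (fun H ↦ H.CliqueFree (r + 1)) G) {u w : V} (hne : u ≠ w)
    (hn : ¬ G.Adj u w) :
    ∃ s : Finset V, #s + 1 = r ∧
      G.neighborFinset u ∪ G.neighborFinset w ⊆ s.biUnion fun y ↦ (G.neighborFinset y)ᶜ := by
  obtain ⟨s, hus, -, hu, hw⟩ := exists_of_maximal_cliqueFree_not_adj h hne hn
  refine ⟨s, by rw [← card_insert_of_notMem hus, hu.card_eq], fun x hx ↦ ?_⟩
  simp only [mem_union, mem_neighborFinset] at hx
  obtain ⟨y, hy, hxy⟩ := hx.elim (hu.exists_mem_not_adj_of_adj_of_cliqueFree_succ h.1)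
    (hw.exists_mem_not_adj_of_adj_of_cliqueFree_succ h.1)
  exact mem_biUnion.2 ⟨y, hy, by simpa [mem_neighborFinset] using fun h ↦ hxy h.symm⟩

end SimpleGraph

open Finset in
theorem stmt5_general {V : Type*} [Fintype V] [DecidableEq V] (G : SimpleGraph V) [DecidableRel G.Adj]
    (r : ℕ)
    (hmax : Maximal (fun H : SimpleGraph V => H.CliqueFree (r + 1)) G) :
    ∀ u w : V, w ≠ u → ¬G.Adj u w →
      (G.degree u : ℝ) + G.degree w -
          (r - 1) * ((Fintype.card V : ℝ) - G.minDegree) ≤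
        (univ.filter fun x => G.Adj u x ∧ G.Adj w x).card := by
  intro u w hwu hnadj
  obtain ⟨s, rfl, hcover⟩ :=
    G.exists_neighborFinset_union_subset_biUnion_compl_of_maximal_cliqueFree hmax hwu.symm hnadj
  have hδ : G.minDegree ≤ Fintype.card V :=
    (G.minDegree_le_degree u).trans (G.degree_lt_card_verts u).le
  have hunion : (#(G.neighborFinset u ∪ G.neighborFinset w) : ℝ) ≤
      #s * ((Fintype.card V : ℝ) - G.minDegree) := by
    rw [← Nat.cast_sub hδ]
    exact_mod_cast (card_le_card hcover).trans (G.card_biUnion_compl_neighborFinset_le s)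
  have hsum : (G.degree u : ℝ) + G.degree w =
      #(G.neighborFinset u ∪ G.neighborFinset w) + #(G.neighborFinset u ∩ G.neighborFinset w) := by
    rw [← G.card_neighborFinset_eq_degree, ← G.card_neighborFinset_eq_degree]
    exact_mod_cast (card_union_add_card_inter _ _).symm
  have hinter : (univ.filter fun x => G.Adj u x ∧ G.Adj w x) =
      G.neighborFinset u ∩ G.neighborFinset w := by
    ext x; simp
  rw [hinter]
  push_cast
  linarith

open Finset in
theorem stmt5 {V : Type*} [Fintype V] [DecidableEq V] (G : SimpleGraph V) [DecidableRel G.Adj]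
    (r : ℕ) (hr : 3 ≤ r)
    (hmax : Maximal (fun H : SimpleGraph V => H.CliqueFree (r + 1)) G)
    (hδ : ((1 : ℝ) - 2 / (2 * r - 1)) * (Fintype.card V) < G.minDegree) :
    ∀ u w : V, w ≠ u → ¬G.Adj u w →
      (G.degree u : ℝ) + G.degree w -
          (r - 1) * ((Fintype.card V : ℝ) - G.minDegree) ≤
        (univ.filter fun x => G.Adj u x ∧ G.Adj w x).card :=
  stmt5_general G r hmax
end

section
/- Let r ≥ 3 and let G be a maximal K_{r+1}-free graph on n vertices with δ(G) > (1 - 2/(2r-1))·n. Then for every vertex u, the subgraph of G induced on the non-neighbors of u is triangle-free. -/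
/-!
Let `M v` be the set of non-neighbours of `v` (including `v`) and `c = 2n/(2r-1)`, so the degree
condition says `|M v| < c`. If `u ≠ x` are non-adjacent, maximality gives an `(r-1)`-clique `A`
joined to both; a common neighbour of `A` is adjacent to neither `u` nor `x`, and every other
vertex lies in some `M a`, `a ∈ A`. Hence `|M u ∩ M x| ≥ n - (r-1)c`, i.e. at most `rc - n`
neighbours of `u` miss `x`.

Now let `x, y, z` be a triangle of non-neighbours of `u`. Their common neighbourhood `S` spans no
`K_{r-2}`, and inside `S` every vertex has fewer than `c` non-neighbours, so greedily picking a
vertex and passing to its neighbourhood gives `|S| ≤ (r-3)c`. The neighbourhood of `u` is covered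
by `S` and the three sets of neighbours of `u` missing `x`, `y` or `z`, so
`n - c < (r-3)c + 3(rc - n)`, i.e. `2n < (2r-1)c`, a contradiction.
-/

open Finset

namespace SimpleGraph

variable {V : Type*} {G : SimpleGraph V}

lemma IsNClique.not_adj_of_forall_adj [DecidableEq V] {r : ℕ} {s : Finset V} {x p : V}
    (hc : G.IsNClique r (insert x s)) (h : G.CliqueFree (r + 1)) (hp : ∀ a ∈ s, G.Adj a p) :
    ¬ G.Adj x p := by
  obtain ⟨y, hy, hpy⟩ := hc.exists_not_adj_of_cliqueFree_succ h p
  obtain rfl | hy := mem_insert.1 hy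
  · exact fun hyp => hpy hyp.symm
  · exact absurd (hp y hy).symm hpy

variable [DecidableRel G.Adj]

lemma card_le_mul_of_cliqueFreeOn {b : ℝ} (hb : 0 ≤ b) {s : ℕ} {T : Finset V}
    (hT : G.CliqueFreeOn T (s + 1))
    (hdeg : ∀ v ∈ T, (#{w ∈ T | ¬ G.Adj v w} : ℝ) ≤ b) : (#T : ℝ) ≤ s * b := by
  induction s generalizing T with
  | zero =>
    suffices T = ∅ by simp [this]
    refine eq_empty_of_forall_notMem fun v hv => hT (t := {v}) (by simpa using hv) ?_
    exact isNClique_one.2 ⟨v, rfl⟩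
  | succ s ih =>
    obtain rfl | ⟨v, hv⟩ := T.eq_empty_or_nonempty
    · simp only [card_empty, Nat.cast_zero]
      positivity
    have hnbr : (#{w ∈ T | G.Adj v w} : ℝ) ≤ s * b := by
      refine ih (CliqueFreeOn.subset _ (fun w hw => by simpa using hw) (hT.of_succ _ hv))
        fun w hw => le_trans ?_ (hdeg w (mem_filter.1 hw).1)
      gcongr
      exact filter_subset _ _
    rw [← card_filter_add_card_filter_not (s := T) (fun w => G.Adj v w)]
    push_cast
    linarith [hdeg v hv]

variable [Fintype V]

lemma card_le_card_add_sum_of_forall_adj_mem {T A B : Finset V}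
    (hB : ∀ p ∈ T, (∀ a ∈ A, G.Adj a p) → p ∈ B) :
    #T ≤ #B + ∑ a ∈ A, #{p ∈ T | ¬ G.Adj a p} := by
  classical
  calc #T ≤ #(B ∪ A.biUnion fun a => {p ∈ T | ¬ G.Adj a p}) := by
        refine card_le_card fun p hp => ?_
        by_cases h : ∀ a ∈ A, G.Adj a p
        · exact mem_union_left _ (hB p hp h)
        · push Not at h
          simpa [hp] using Or.inr h
    _ ≤ _ := (card_union_le _ _).trans (by gcongr; exact card_biUnion_le)

lemma card_sub_mul_le_card_filter_not_adj_and_not_adj {r : ℕ}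
    (h : Maximal (fun H : SimpleGraph V => H.CliqueFree (r + 1)) G) {c : ℝ}
    (hc : ∀ v, (#{w | ¬ G.Adj v w} : ℝ) ≤ c) {x y : V} (hne : x ≠ y) (hn : ¬ G.Adj x y) :
    (Fintype.card V : ℝ) - (r - 1) * c ≤ #{w | ¬ G.Adj x w ∧ ¬ G.Adj y w} := by
  classical
  obtain ⟨s, hxs, -, hx, hy⟩ := exists_of_maximal_cliqueFree_not_adj h hne hn
  have hs : (#s : ℝ) = r - 1 := by
    rw [← hx.card_eq, card_insert_of_notMem hxs]
    push_cast
    ring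
  have hcover : (Fintype.card V : ℝ) ≤
      #{w | ¬ G.Adj x w ∧ ¬ G.Adj y w} + ∑ a ∈ s, (#{w | ¬ G.Adj a w} : ℝ) := by
    rw [← card_univ]
    exact_mod_cast card_le_card_add_sum_of_forall_adj_mem fun p _ hp => by
      simpa using ⟨hx.not_adj_of_forall_adj h.1 hp, hy.not_adj_of_forall_adj h.1 hp⟩
  have hsum : (∑ a ∈ s, (#{w | ¬ G.Adj a w} : ℝ)) ≤ (r - 1) * c := by
    simpa [hs] using sum_le_card_nsmul s _ c fun a _ => hc a
  linarith

lemma card_filter_not_adj_add_degree (v : V) :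
    #{w | ¬ G.Adj v w} + G.degree v = Fintype.card V := by
  rw [← card_neighborFinset_eq_degree, neighborFinset_eq_filter, add_comm]
  exact card_filter_add_card_filter_not _

lemma card_filter_not_adj_and_not_adj_add (u a : V) :
    #{p | ¬ G.Adj u p ∧ ¬ G.Adj a p} + #{p ∈ G.neighborFinset u | ¬ G.Adj a p} =
      #{p | ¬ G.Adj a p} := by
  rw [← card_filter_add_card_filter_not (s := {p | ¬ G.Adj a p}) (fun p => ¬ G.Adj u p),
    filter_filter, filter_filter, neighborFinset_eq_filter, filter_filter]
  congr 2 <;> ext p <;> simp [and_comm]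

lemma card_filter_neighborFinset_not_adj_le {r : ℕ}
    (h : Maximal (fun H : SimpleGraph V => H.CliqueFree (r + 1)) G) {c : ℝ}
    (hc : ∀ v, (#{w | ¬ G.Adj v w} : ℝ) ≤ c) {u a : V} (hne : u ≠ a) (hn : ¬ G.Adj u a) :
    (#{p ∈ G.neighborFinset u | ¬ G.Adj a p} : ℝ) ≤ r * c - Fintype.card V := by
  have hpair := card_sub_mul_le_card_filter_not_adj_and_not_adj h hc hne hn
  have hsplit : (#{p | ¬ G.Adj u p ∧ ¬ G.Adj a p} : ℝ) +
      #{p ∈ G.neighborFinset u | ¬ G.Adj a p} = #{p | ¬ G.Adj a p} := by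
    exact_mod_cast card_filter_not_adj_and_not_adj_add u a
  linarith [hc a]

lemma cliqueFreeOn_compl_neighborSet_three {r : ℕ}
    (h : Maximal (fun H : SimpleGraph V => H.CliqueFree (r + 1)) G) (hr : 3 ≤ r) {c : ℝ}
    (hc : ∀ v, (#{w | ¬ G.Adj v w} : ℝ) < c) (hcn : (2 * r - 1) * c ≤ 2 * Fintype.card V)
    (u : V) : G.CliqueFreeOn (Gᶜ.neighborSet u) 3 := by
  classical
  obtain ⟨k, rfl⟩ := Nat.exists_eq_add_of_le' hr
  intro t ht htri
  obtain ⟨x, y, z, hxy, hxz, hyz, rfl⟩ := is3Clique_iff.1 htri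
  simp only [coe_insert, coe_singleton, Set.insert_subset_iff, Set.singleton_subset_iff,
    mem_neighborSet, compl_adj] at ht
  obtain ⟨⟨hux, hnx⟩, ⟨huy, hny⟩, ⟨huz, hnz⟩⟩ := ht
  set n := Fintype.card V
  set S : Finset V := {p | G.Adj x p ∧ G.Adj y p ∧ G.Adj z p}
  have hc0 : 0 ≤ c := (Nat.cast_nonneg _).trans (hc u).le
  have hfree : G.CliqueFreeOn S (k + 1) :=
    CliqueFreeOn.subset _ (fun p hp => by simp_all [S])
      (((h.1.cliqueFreeOn (s := Set.univ)).of_succ _ (Set.mem_univ x)).of_succ _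
        ⟨trivial, hxy⟩ |>.of_succ _ ⟨⟨trivial, hxz⟩, hyz⟩)
  have hS : (#S : ℝ) ≤ k * c := card_le_mul_of_cliqueFreeOn hc0 hfree fun v _ =>
    (Nat.cast_le.2 (card_le_card fun w hw => by simp_all)).trans (hc v).le
  have hcover : (G.degree u : ℝ) ≤
      #S + ∑ a ∈ {x, y, z}, (#{p ∈ G.neighborFinset u | ¬ G.Adj a p} : ℝ) := by
    rw [← card_neighborFinset_eq_degree]
    exact_mod_cast card_le_card_add_sum_of_forall_adj_mem fun p _ hp => by simpa [S] using hp
  have hnbr : ∀ a, u ≠ a → ¬ G.Adj u a →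
      (#{p ∈ G.neighborFinset u | ¬ G.Adj a p} : ℝ) ≤ (k + 3) * c - n := fun a hua hna => by
    simpa using card_filter_neighborFinset_not_adj_le h (fun v => (hc v).le) hua hna
  have hsum : (∑ a ∈ {x, y, z}, (#{p ∈ G.neighborFinset u | ¬ G.Adj a p} : ℝ))
      ≤ 3 * ((k + 3) * c - n) := by
    have hb : 0 ≤ (k + 3) * c - n := (Nat.cast_nonneg _).trans (hnbr x hux hnx)
    calc _ ≤ #{x, y, z} • ((k + 3) * c - n) := by
          refine sum_le_card_nsmul _ _ _ fun a ha => ?_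
          simp only [mem_insert, mem_singleton] at ha
          obtain rfl | rfl | rfl := ha
          exacts [hnbr _ hux hnx, hnbr _ huy hny, hnbr _ huz hnz]
      _ ≤ 3 * ((k + 3) * c - n) := by
          rw [nsmul_eq_mul]
          gcongr
          exact_mod_cast card_le_three
  have hdeg : (#{w | ¬ G.Adj u w} : ℝ) + G.degree u = n := by
    exact_mod_cast card_filter_not_adj_add_degree u
  push_cast at hcn
  linarith [hc u]

end SimpleGraph

theorem stmt6 {V : Type*} [Fintype V] (G : SimpleGraph V) [DecidableRel G.Adj]
    (r : ℕ) (hr : 3 ≤ r)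
    (hmax : Maximal (fun H : SimpleGraph V => H.CliqueFree (r + 1)) G)
    (hδ : ((1 : ℝ) - 2 / (2 * r - 1)) * (Fintype.card V) < G.minDegree) :
    ∀ u : V, (G.induce {v : V | v ≠ u ∧ ¬G.Adj u v}).CliqueFree 3 := by
  intro u
  have hr' : (0 : ℝ) < 2 * r - 1 := by
    have : (3 : ℝ) ≤ r := by exact_mod_cast hr
    linarith
  have hc : ∀ v, (#{w | ¬ G.Adj v w} : ℝ) < 2 * Fintype.card V / (2 * r - 1) := fun v => by
    have hdeg : (#{w | ¬ G.Adj v w} : ℝ) + G.degree v = Fintype.card V := by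
      exact_mod_cast SimpleGraph.card_filter_not_adj_add_degree v
    have hmin : (G.minDegree : ℝ) ≤ G.degree v := by exact_mod_cast G.minDegree_le_degree v
    rw [sub_mul, div_mul_eq_mul_div] at hδ
    linarith
  have hnbr : {v | v ≠ u ∧ ¬ G.Adj u v} = Gᶜ.neighborSet u := by
    ext v
    simp [ne_comm]
  rw [SimpleGraph.cliqueFree_induce_iff, hnbr]
  exact SimpleGraph.cliqueFreeOn_compl_neighborSet_three hmax hr hc
    (by rw [mul_div_cancel₀ _ hr'.ne']) u
end

section
/- Let r ≥ 3, let G be a K_{r+1}-free graph on n vertices with δ(G) > (1 - 2/(2r-1))·n, and let u be a vertex of G whose non-neighborhood is independent. Let N be the subgraph induced on the neighborhood of u. Then N is K_r-free and δ(N) > (1 - 2/(2r-3))·|N|. -/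
/-!
Adding `u` to a clique of its neighbourhood `N` gives a larger clique of `G`, so `N` is
`K_r`-free. A vertex of `N` loses at most the `n - |N|` vertices outside `N` when passing from `G`
to `N`, so `δ(N) ≥ δ(G) - n + |N|`; since also `|N| ≥ δ(G) > (2r-3)/(2r-1) · n`, this lower bound
exceeds `(2r-5)/(2r-3) · |N|`.
-/

open Finset

namespace SimpleGraph

variable {V : Type*}

theorem CliqueFree.induce_neighborSet {G : SimpleGraph V} {n : ℕ} (h : G.CliqueFree (n + 1))
    (u : V) : (G.induce (G.neighborSet u)).CliqueFree n := by
  rw [cliqueFree_induce_iff]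
  simpa using G.cliqueFreeOn_univ.2 h |>.of_succ G (Set.mem_univ u)

variable [Fintype V] (G : SimpleGraph V) [DecidableRel G.Adj] (s : Set V) [DecidablePred (· ∈ s)]

theorem degree_add_card_le_degree_induce_add_card (v : s) :
    G.degree v + Fintype.card s ≤ (G.induce s).degree v + Fintype.card V := by
  classical
  have h_inside : #(G.neighborFinset v ∩ s.toFinset) = (G.induce s).degree v := by
    rw [← map_neighborFinset_induce, card_map, card_neighborFinset_eq_degree]
  have h_outside : #(G.neighborFinset v \ s.toFinset) + #s.toFinset ≤ Fintype.card V := by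
    rw [← card_compl_add_card s.toFinset]
    gcongr
    exact fun w hw ↦ mem_compl.2 (mem_sdiff.1 hw).2
  rw [← card_neighborFinset_eq_degree, ← card_inter_add_card_sdiff _ s.toFinset,
    ← Set.toFinset_card]
  omega

theorem minDegree_add_card_le_minDegree_induce_add_card :
    G.minDegree + Fintype.card s ≤ (G.induce s).minDegree + Fintype.card V := by
  rcases isEmpty_or_nonempty s with hs | hs
  · have : G.minDegree ≤ Fintype.card V := by
      rcases isEmpty_or_nonempty V with hV | hV
      · simp [minDegree_of_subsingleton]
      · exact G.minDegree_lt_card.le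
    simp only [Fintype.card_eq_zero]
    omega
  · obtain ⟨v, hv⟩ := (G.induce s).exists_minimal_degree_vertex
    calc G.minDegree + Fintype.card s ≤ G.degree v + Fintype.card s := by
          gcongr; exact G.minDegree_le_degree v
      _ ≤ (G.induce s).minDegree + Fintype.card V :=
          hv ▸ G.degree_add_card_le_degree_induce_add_card s v

end SimpleGraph

theorem one_sub_two_div_sub_three_mul_lt {r n m δ d : ℝ} (hr : 3 < 2 * r)
    (hδ : (1 - 2 / (2 * r - 1)) * n < δ) (hδm : δ ≤ m) (hd : δ + m ≤ d + n) :
    (1 - 2 / (2 * r - 3)) * m < d := by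
  have hA : 0 < 2 * r - 1 := by linarith
  have hB : 0 < 2 * r - 3 := by linarith
  have hn : (2 * r - 3) * n < (2 * r - 1) * δ := by
    rw [show 1 - 2 / (2 * r - 1) = (2 * r - 3) / (2 * r - 1) by field_simp; ring,
      div_mul_eq_mul_div, div_lt_iff₀ hA] at hδ
    linarith
  rw [show 1 - 2 / (2 * r - 3) = (2 * r - 5) / (2 * r - 3) by field_simp; ring,
    div_mul_eq_mul_div, div_lt_iff₀ hB]
  nlinarith [mul_le_mul_of_nonneg_left hd hB.le]

theorem stmt11_general {V : Type*} [Fintype V] (G : SimpleGraph V) [DecidableRel G.Adj]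
    (r : ℕ) (hr : 3 ≤ r) (hfree : G.CliqueFree (r + 1))
    (hδ : ((1 : ℝ) - 2 / (2 * r - 1)) * (Fintype.card V) < G.minDegree)
    (u : V) :
    (G.induce (G.neighborSet u)).CliqueFree r ∧
    ((1 : ℝ) - 2 / (2 * r - 3)) * Fintype.card (G.neighborSet u) <
      (G.induce (G.neighborSet u)).minDegree := by
  refine ⟨hfree.induce_neighborSet u, ?_⟩
  have hr' : (3 : ℝ) < 2 * r := by
    have : (3 : ℝ) ≤ r := by exact_mod_cast hr
    linarith
  have hδm : G.minDegree ≤ Fintype.card (G.neighborSet u) :=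
    G.card_neighborSet_eq_degree u ▸ G.minDegree_le_degree u
  have hd := G.minDegree_add_card_le_minDegree_induce_add_card (G.neighborSet u)
  exact one_sub_two_div_sub_three_mul_lt hr' hδ (by exact_mod_cast hδm) (by exact_mod_cast hd)

theorem stmt11 {V : Type*} [Fintype V] (G : SimpleGraph V) [DecidableRel G.Adj]
    (r : ℕ) (hr : 3 ≤ r) (hfree : G.CliqueFree (r + 1))
    (hδ : ((1 : ℝ) - 2 / (2 * r - 1)) * (Fintype.card V) < G.minDegree)
    (u : V) (hu : ∀ v w : V, v ≠ u → w ≠ u → ¬G.Adj u v → ¬G.Adj u w → ¬G.Adj v w) :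
    (G.induce (G.neighborSet u)).CliqueFree r ∧
    ((1 : ℝ) - 2 / (2 * r - 3)) * Fintype.card (G.neighborSet u) <
      (G.induce (G.neighborSet u)).minDegree :=
  stmt11_general G r hr hfree hδ u
end

section
/- The Häggkvist graph H(k) is triangle-free, 4-chromatic, and 10k-regular with 29k vertices, where H(k) is constructed as follows: partition the vertex set into A_1,...,A_5 of size 3k each, B_1,...,B_5 of size 2k each, and C of size 4k; join u ∈ A_i to v ∈ A_j iff i - j ≡ ±1 (mod 5); join u ∈ A_i to v ∈ B_j iff i - j ≡ ±1 (mod 5); join every vertex of C to every vertex of B_1 ∪ ... ∪ B_5. -/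
/-- `i` and `j` differ by `±1` modulo 5. -/
def pentNear (i j : ZMod 5) : Prop := i - j = 1 ∨ j - i = 1

instance : DecidableRel pentNear := fun i j => inferInstanceAs (Decidable (_ ∨ _))

/-- The Häggkvist graph `H(k)`: classes `A_1, …, A_5` of size `3k`, `B_1, …, B_5` of
size `2k` and `C` of size `4k`; `A_i` is joined to `A_j` and to `B_j` iff `i - j ≡ ±1 (mod 5)`,
and `C` is completely joined to `B_1 ∪ ⋯ ∪ B_5`. -/
def haggkvistGraph (k : ℕ) :
    SimpleGraph ((ZMod 5 × Fin (3 * k)) ⊕ ((ZMod 5 × Fin (2 * k)) ⊕ Fin (4 * k))) where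
  Adj x y := match x, y with
    | .inl (i, _), .inl (j, _) => pentNear i j
    | .inl (i, _), .inr (.inl (j, _)) => pentNear i j
    | .inr (.inl (j, _)), .inl (i, _) => pentNear i j
    | .inr (.inl _), .inr (.inr _) => True
    | .inr (.inr _), .inr (.inl _) => True
    | _, _ => False
  symm := by
    constructor
    rintro (⟨i, x⟩ | (⟨i, x⟩ | x)) (⟨j, y⟩ | (⟨j, y⟩ | y)) hadj <;>
      first
        | exact hadj.symm
        | exact Or.symm hadj
        | exact hadj
  loopless := by
    constructor
    rintro (⟨i, x⟩ | (⟨i, x⟩ | x)) hadj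
    · rcases hadj with h | h <;> rw [sub_self] at h <;> exact absurd h (by decide)
    · exact hadj
    · exact hadj

instance haggkvistGraph.instDecidableRelAdj (k : ℕ) :
    DecidableRel (haggkvistGraph k).Adj := fun x y =>
  match x, y with
  | .inl (i, _), .inl (j, _) => inferInstanceAs (Decidable (pentNear i j))
  | .inl (i, _), .inr (.inl (j, _)) => inferInstanceAs (Decidable (pentNear i j))
  | .inr (.inl (j, _)), .inl (i, _) => inferInstanceAs (Decidable (pentNear i j))
  | .inr (.inl _), .inr (.inr _) => inferInstanceAs (Decidable True)
  | .inr (.inr _), .inr (.inl _) => inferInstanceAs (Decidable True)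
  | .inl _, .inr (.inr _) => inferInstanceAs (Decidable False)
  | .inr (.inr _), .inl _ => inferInstanceAs (Decidable False)
  | .inr (.inl _), .inr (.inl _) => inferInstanceAs (Decidable False)
  | .inr (.inr _), .inr (.inr _) => inferInstanceAs (Decidable False)


/-!
Collapsing every class of `H(k)` to a single vertex gives the Grötzsch graph (the Mycielskian
of the 5-cycle), and `H(k)` is its blow-up with class sizes `3k`, `2k`, `4k`. Homomorphisms in
both directions (the reverse one picks a representative of each class, which needs `k ≥ 1`)
carry triangle-freeness and the chromatic number 4 over from the Grötzsch graph. The degree of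
a vertex of the blow-up is `k` times the total weight of the neighbourhood of its class, and
that weight is `2·3 + 2·2`, `2·3 + 4` or `5·2`, i.e. always `10`.
-/

open Finset

namespace SimpleGraph

variable {V W : Type*} {G : SimpleGraph V} {H : SimpleGraph W}

theorem CliqueFree.of_hom {n : ℕ} (f : G →g H) (h : H.CliqueFree n) : G.CliqueFree n := by
  rw [cliqueFree_iff] at h ⊢
  exact ⟨fun c => h.false ⟨f.comp c.toHom, (f.comp c.toHom).injective_of_top_hom⟩⟩

theorem degree_eq_sum_card_fiber [Fintype V] [DecidableRel G.Adj] [Fintype W] [DecidableEq W]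
    [DecidableRel H.Adj] (f : V → W) (hf : ∀ u v, G.Adj u v ↔ H.Adj (f u) (f v)) (v : V) :
    G.degree v = ∑ w ∈ H.neighborFinset (f v), #{u | f u = w} := by
  rw [← card_neighborFinset_eq_degree, card_eq_sum_card_fiberwise (f := f)]
  · refine sum_congr rfl fun w hw => congrArg card ?_
    ext u
    simp only [mem_filter, mem_neighborFinset, mem_univ, true_and, and_iff_right_iff_imp] at hw ⊢
    rintro rfl
    exact (hf v u).2 hw
  · intro u hu
    simpa [hf] using hu

end SimpleGraph

set_option maxRecDepth 10000 in
theorem pentagon_coloring_exists_rainbow_neighbors (a : ZMod 5 → Fin 3)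
    (ha : ∀ i, a i ≠ a (i + 1)) (c : Fin 3) :
    ∃ j, a (j - 1) ≠ a (j + 1) ∧ a (j - 1) ≠ c ∧ a (j + 1) ≠ c := by
  revert a c
  decide

def grotzschGraph : SimpleGraph (ZMod 5 ⊕ (ZMod 5 ⊕ Unit)) where
  Adj x y := match x, y with
    | .inl i, .inl j => pentNear i j
    | .inl i, .inr (.inl j) => pentNear i j
    | .inr (.inl j), .inl i => pentNear i j
    | .inr (.inl _), .inr (.inr _) => True
    | .inr (.inr _), .inr (.inl _) => True
    | _, _ => False
  symm := by
    constructor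
    rintro (i | j | _) (i' | j' | _) h <;> first | exact h | exact Or.symm h
  loopless := by
    constructor
    rintro (i | j | _) h
    · exact absurd h (by revert i; decide)
    all_goals exact h

namespace grotzschGraph

instance : DecidableRel grotzschGraph.Adj := by
  rintro (_ | _ | _) (_ | _ | _) <;> dsimp only [grotzschGraph] <;> infer_instance

theorem cliqueFree_three : grotzschGraph.CliqueFree 3 := by
  intro s hs
  obtain ⟨a, b, c, hab, hac, hbc, -⟩ := SimpleGraph.is3Clique_iff.1 hs
  revert a b c
  decide

def coloring : grotzschGraph.Coloring (Fin 4) :=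
  SimpleGraph.Coloring.mk (Sum.elim ![0, 1, 0, 1, 2] (Sum.elim (fun _ => 3) fun _ => 0))
    fun {v w} => by revert v w; decide

theorem not_colorable_three : ¬ grotzschGraph.Colorable 3 := by
  rintro ⟨C⟩
  obtain ⟨j, h₁, h₂, h₃⟩ := pentagon_coloring_exists_rainbow_neighbors (fun i => C (.inl i))
    (fun i => C.valid (Or.inr (add_sub_cancel_left i 1))) (C (.inr (.inr ())))
  -- `.inr (.inl j)` is adjacent to `.inl (j ± 1)` and `.inr (.inr ())`, which carry three colours
  have hb₁ : C (.inl (j - 1)) ≠ C (.inr (.inl j)) := C.valid (Or.inr (sub_sub_cancel j 1))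
  have hb₂ : C (.inl (j + 1)) ≠ C (.inr (.inl j)) := C.valid (Or.inl (add_sub_cancel_left j 1))
  have hb₃ : C (.inr (.inr ())) ≠ C (.inr (.inl j)) := C.valid trivial
  omega

end grotzschGraph

namespace haggkvistGraph

variable (k : ℕ)

def proj : (ZMod 5 × Fin (3 * k)) ⊕ ((ZMod 5 × Fin (2 * k)) ⊕ Fin (4 * k)) →
    ZMod 5 ⊕ (ZMod 5 ⊕ Unit) :=
  Sum.map Prod.fst (Sum.map Prod.fst fun _ => ())

theorem adj_iff_adj_proj {k : ℕ} (u v) :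
    (haggkvistGraph k).Adj u v ↔ grotzschGraph.Adj (proj k u) (proj k v) := by
  rcases u with _ | _ | _ <;> rcases v with _ | _ | _ <;> rfl

def toGrotzsch : haggkvistGraph k →g grotzschGraph :=
  ⟨proj k, (adj_iff_adj_proj _ _).1⟩

def ofGrotzsch (hk : 1 ≤ k) : grotzschGraph →g haggkvistGraph k where
  toFun := Sum.map (·, ⟨0, by omega⟩) (Sum.map (·, ⟨0, by omega⟩) fun _ => ⟨0, by omega⟩)
  map_rel' {u v} h := by
    rcases u with _ | _ | _ <;> rcases v with _ | _ | _ <;> exact h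

def weight : ZMod 5 ⊕ (ZMod 5 ⊕ Unit) → ℕ :=
  Sum.elim (fun _ => 3) (Sum.elim (fun _ => 2) fun _ => 4)

theorem card_fiber_proj (w) : #{u | proj k u = w} = weight w * k := by
  rw [card_filter, Fintype.sum_sum_type, Fintype.sum_sum_type]
  rcases w with _ | _ | _ <;> simp only [Fintype.sum_prod_type] <;> simp [proj, weight]

theorem sum_weight_neighborFinset (w) :
    ∑ x ∈ grotzschGraph.neighborFinset w, weight x = 10 := by
  revert w
  decide

end haggkvistGraph

theorem stmt16 (k : ℕ) (hk : 1 ≤ k) :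
    (haggkvistGraph k).CliqueFree 3 ∧
    (haggkvistGraph k).chromaticNumber = 4 ∧
    (haggkvistGraph k).IsRegularOfDegree (10 * k) ∧
    Fintype.card ((ZMod 5 × Fin (3 * k)) ⊕ ((ZMod 5 × Fin (2 * k)) ⊕ Fin (4 * k))) =
      29 * k := by
  refine ⟨grotzschGraph.cliqueFree_three.of_hom (haggkvistGraph.toGrotzsch k), ?_, fun v => ?_, ?_⟩
  · rw [show (4 : ℕ∞) = (3 : ℕ) + 1 from rfl,
      SimpleGraph.chromaticNumber_eq_iff_colorable_not_colorable]
    exact ⟨grotzschGraph.coloring.colorable.of_hom (haggkvistGraph.toGrotzsch k),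
      fun h => grotzschGraph.not_colorable_three (h.of_hom (haggkvistGraph.ofGrotzsch k hk))⟩
  · rw [SimpleGraph.degree_eq_sum_card_fiber _ haggkvistGraph.adj_iff_adj_proj]
    simp only [haggkvistGraph.card_fiber_proj, ← sum_mul,
      haggkvistGraph.sum_weight_neighborFinset]
  · simp only [Fintype.card_sum, Fintype.card_prod, Fintype.card_fin, ZMod.card]
    ring
end
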